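/- arXiv:2110.01114 — 2 statements merged into one kernel-verified Lean document; each statement's English description precedes it below -/
import Mathlib

section
/- The relation ⊂ on n-tuples of natural numbers, defined by: (x₀,...,x_{n-1}) ⊆ (y₀,...,y_{n-1}) iff there is a permutation π of {0,...,n-1} such that x_i is a binary-notation prefix of y_{π(i)} for all i, and x ⊂ y iff x ⊆ y but not y ⊆ x, is well-founded. -/
/-- `x` is a binary prefix of `y`: `y = x·2^n + z` with `z < 2^n`. -/
def IsBPrefix (x y : ℕ) : Prop := ∃ n z : ℕ, z < 2^n ∧ y = x * 2^n + z

/-- Permutation-of-prefixes preorder on `n`-tuples. -/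
def TupleSub {n : ℕ} (x y : Fin n → ℕ) : Prop :=
  ∃ π : Equiv.Perm (Fin n), ∀ i, IsBPrefix (x i) (y (π i))

/-- Strict permutation-of-prefixes order: `x ⊆ y` but not `y ⊆ x`. -/
def TupleSSub {n : ℕ} (x y : Fin n → ℕ) : Prop :=
  TupleSub x y ∧ ¬ TupleSub y x

lemma isBPrefix_refl (x : ℕ) : IsBPrefix x x := ⟨0, 0, by simp⟩

lemma IsBPrefix.le {x y : ℕ} (h : IsBPrefix x y) : x ≤ y := by
  obtain ⟨m, z, _, rfl⟩ := h
  calc x ≤ x * 2^m := Nat.le_mul_of_pos_right x (Nat.pow_pos (by norm_num : 0 < 2))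
    _ ≤ x * 2^m + z := Nat.le_add_right _ _

theorem tupleSSub_wellFounded (n : ℕ) :
    WellFounded (fun x y : Fin n → ℕ => TupleSSub x y) := by
  have key : ∀ x y : Fin n → ℕ, TupleSSub x y → (∑ i, x i) < ∑ i, y i := by
    intro x y ⟨⟨π, hπ⟩, hns⟩
    have hle : ∀ i, x i ≤ y (π i) := fun i => (hπ i).le
    have hsum : (∑ i, x i) ≤ ∑ i, y i := by
      calc (∑ i, x i) ≤ ∑ i, y (π i) := Finset.sum_le_sum fun i _ => hle i
        _ = ∑ i, y i := Equiv.sum_comp π y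
    rcases lt_or_eq_of_le hsum with h | h
    · exact h
    · exfalso
      have heq : ∀ i ∈ Finset.univ, x i = y (π i) := by
        rw [← Finset.sum_eq_sum_iff_of_le fun i _ => hle i]
        rw [h]
        exact (Equiv.sum_comp π y).symm
      exact hns ⟨π.symm, fun j => by
        have := heq (π.symm j) (Finset.mem_univ _)
        rw [Equiv.apply_symm_apply] at this
        rw [← this]
        exact isBPrefix_refl _⟩
  exact Subrelation.wf (fun {x y} h => key x y h)
    (InvImage.wf (fun x : Fin n → ℕ => ∑ i, x i) Nat.lt_wfRel.wf)
end

section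
/- Define ε : ℕ → ℕ → ℕ by ε(0, y) = 2y and ε(x, y) = ε(x', ε(x', y)) for x > 0, where x' = ⌊x/2⌋. Then the iterates ε¹(x) = ε(x, 1), ε^{m+1}(x) = ε¹(ε^m(x)) dominate the standard elementary growth functions: for every m there exists k such that E₂^m(x) ≤ ε^{m+k}(x) for all x, where E₁(x) = x² + 2, E₂(0) = 2, E₂(x+1) = E₁(E₂(x)), and E₂^0(x) = x, E₂^{m+1}(x) = E₂(E₂^m(x)). -/
/-- `ε(0,y) = 2y`, `ε(x,y) = ε(⌊x/2⌋, ε(⌊x/2⌋, y))` for `x > 0`. -/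
def eps : ℕ → ℕ → ℕ
  | 0, y => 2 * y
  | n+1, y => eps ((n+1)/2) (eps ((n+1)/2) y)
  termination_by x _ => x
  decreasing_by all_goals exact Nat.div_lt_self (Nat.succ_pos n) one_lt_two

/-- Iterates of `ε`: `ε⁰(x) = x`, `ε^{m+1}(x) = ε¹(ε^m(x))` where `ε¹(x) = ε(x,1)`. -/
def epsIter : ℕ → ℕ → ℕ
  | 0, x => x
  | m+1, x => eps (epsIter m x) 1

/-- `E₁(x) = x² + 2`, `E₂(0) = 2`, `E₂(x+1) = E₁(E₂(x))`. -/
def E2 : ℕ → ℕ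
  | 0 => 2
  | x+1 => (E2 x)^2 + 2

/-- Iterates: `E₂⁰(x) = x`, `E₂^{m+1}(x) = E₂(E₂^m(x))`. -/
def E2Iter : ℕ → ℕ → ℕ
  | 0, x => x
  | m+1, x => E2 (E2Iter m x)

/-- Binary length. -/
def Lb : ℕ → ℕ
  | 0 => 0
  | n+1 => Lb ((n+1)/2) + 1
  termination_by x => x
  decreasing_by exact Nat.div_lt_self (Nat.succ_pos _) one_lt_two

lemma eps_eq : ∀ x y, eps x y = 2 ^ 2 ^ Lb x * y
  | 0, y => by simp [eps, Lb]
  | n+1, y => by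
    rw [eps, Lb, eps_eq ((n+1)/2), eps_eq ((n+1)/2), pow_succ, pow_mul]
    ring
  termination_by x => x
  decreasing_by all_goals exact Nat.div_lt_self (Nat.succ_pos _) one_lt_two

lemma lt_two_pow_Lb : ∀ x, x < 2 ^ Lb x
  | 0 => by simp [Lb]
  | n+1 => by
    rw [Lb]
    have h := lt_two_pow_Lb ((n+1)/2)
    have h2 := Nat.div_add_mod (n+1) 2
    have h3 : (n+1) % 2 < 2 := Nat.mod_lt _ (by norm_num)
    rw [pow_succ]
    omega
  termination_by x => x
  decreasing_by exact Nat.div_lt_self (Nat.succ_pos _) one_lt_two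

lemma Lb_mono : ∀ {x y}, x ≤ y → Lb x ≤ Lb y := by
  intro x y
  induction y using Nat.strong_induction_on generalizing x with
  | _ y ih =>
    intro hxy
    match x, y with
    | 0, _ => simp [Lb]
    | a+1, b+1 =>
      rw [Lb, Lb]
      have hd : (a+1)/2 ≤ (b+1)/2 := Nat.div_le_div_right hxy
      have hlt : (b+1)/2 < b+1 := Nat.div_lt_self (Nat.succ_pos b) one_lt_two
      exact Nat.succ_le_succ (ih _ hlt hd)

lemma eps_one_mono {x y : ℕ} (h : x ≤ y) : eps x 1 ≤ eps y 1 := by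
  rw [eps_eq, eps_eq]
  exact Nat.mul_le_mul_right _
    (Nat.pow_le_pow_right (by norm_num) (Nat.pow_le_pow_right (by norm_num) (Lb_mono h)))

lemma two_pow_le_eps_one (x : ℕ) : 2 ^ (x + 1) ≤ eps x 1 := by
  rw [eps_eq, mul_one]
  exact Nat.pow_le_pow_right (by norm_num) (lt_two_pow_Lb x)

lemma E2_lt : ∀ t, E2 t + 1 ≤ 2 ^ 2 ^ (t + 1)
  | 0 => by norm_num [E2]
  | t+1 => by
    have ih := E2_lt t
    have h2 : (2 : ℕ) ≤ 2 ^ (t+1) := by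
      calc (2:ℕ) = 2^1 := rfl
      _ ≤ 2 ^ (t+1) := Nat.pow_le_pow_right (by norm_num) (by omega)
    have h4 : (4 : ℕ) ≤ 2 ^ 2 ^ (t+1) := by
      calc (4:ℕ) = 2^2 := by norm_num
      _ ≤ 2 ^ 2 ^ (t+1) := Nat.pow_le_pow_right (by norm_num) h2
    rw [E2]
    have : 2 ^ 2 ^ (t + 1 + 1) = (2 ^ 2 ^ (t+1))^2 := by
      rw [← pow_mul, pow_succ]
    rw [this]
    nlinarith [ih, h4]

lemma E2_le_epsIter_two (t : ℕ) : E2 t ≤ epsIter 2 t := by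
  show E2 t ≤ eps (eps t 1) 1
  have h1 : 2 ^ (t+1) ≤ eps t 1 := two_pow_le_eps_one t
  calc E2 t ≤ 2 ^ 2 ^ (t+1) := by have := E2_lt t; omega
    _ ≤ 2 ^ (eps t 1 + 1) := Nat.pow_le_pow_right (by norm_num) (by omega)
    _ ≤ eps (eps t 1) 1 := two_pow_le_eps_one _

lemma E2_mono : Monotone E2 := by
  apply monotone_nat_of_le_succ
  intro t
  show E2 t ≤ (E2 t)^2 + 2
  nlinarith [Nat.zero_le (E2 t)]

lemma epsIter_add (a b x : ℕ) : epsIter (a + b) x = epsIter a (epsIter b x) := by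
  induction a with
  | zero => simp [epsIter]
  | succ a ih =>
    rw [Nat.succ_add]
    show eps (epsIter (a + b) x) 1 = eps (epsIter a (epsIter b x)) 1
    rw [ih]

lemma epsIter_mono (n : ℕ) : ∀ {x y : ℕ}, x ≤ y → epsIter n x ≤ epsIter n y := by
  induction n with
  | zero => intro x y h; exact h
  | succ n ih => intro x y h; exact eps_one_mono (ih h)

lemma E2Iter_le (m x : ℕ) : E2Iter m x ≤ epsIter (2 * m) x := by
  induction m with
  | zero => simp [E2Iter, epsIter]
  | succ m ih =>
    have h1 : E2 (E2Iter m x) ≤ E2 (epsIter (2 * m) x) := E2_mono ih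
    have h2 : E2 (epsIter (2 * m) x) ≤ epsIter 2 (epsIter (2 * m) x) :=
      E2_le_epsIter_two _
    calc E2Iter (m+1) x = E2 (E2Iter m x) := rfl
      _ ≤ epsIter 2 (epsIter (2 * m) x) := le_trans h1 h2
      _ = epsIter (2 + 2 * m) x := (epsIter_add 2 (2*m) x).symm
      _ = epsIter (2 * (m+1)) x := by ring_nf

theorem epsIter_dominates_E2Iter :
    ∀ m : ℕ, ∃ k : ℕ, ∀ x : ℕ, E2Iter m x ≤ epsIter (m + k) x := by
  intro m
  exact ⟨m, fun x => by simpa [two_mul] using E2Iter_le m x⟩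
end
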